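/- arXiv:2210.11538 — 2 statements merged into one kernel-verified Lean document; each statement's English description precedes it below -/
import Mathlib

section
/- Let E be a real Hilbert space, W ⊆ E a nonempty closed convex set, and let F : E → ℝ be differentiable, μ-strongly convex and L-smooth on E with 0 < μ ≤ L. Let w* ∈ W satisfy ∇F(w*) = 0, and let 0 < η ≤ 1/L. Let w ∈ E and g ∈ E with ‖g − ∇F(w)‖ ≤ Λ for some Λ ≥ 0, and let proj_W denote the metric projection onto W. Then ‖proj_W(w − η·g) − w*‖ ≤ √(1 − ημ)·‖w − w*‖ + η·Λ. -/
/-- `f` is `μ`-strongly convex on the set `W` of a real inner product space. -/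
def StronglyConvexOn {E : Type*} [NormedAddCommGroup E] [InnerProductSpace ℝ E]
    (W : Set E) (μ : ℝ) (f : E → ℝ) : Prop :=
  ∀ ⦃w : E⦄, w ∈ W → ∀ ⦃w' : E⦄, w' ∈ W → ∀ ⦃t : ℝ⦄, 0 ≤ t → t ≤ 1 →
    f (t • w + (1 - t) • w') ≤ t * f w + (1 - t) * f w' - μ / 2 * (t * (1 - t)) * ‖w - w'‖ ^ 2

open InnerProductSpace intervalIntegral Topology Filter
open scoped RealInnerProductSpace

section Aux

variable {E : Type*} [NormedAddCommGroup E] [InnerProductSpace ℝ E] [CompleteSpace E]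

/-- Derivative of a function along a line, via its gradient. -/
lemma line_hasDerivAt' {G : E → ℝ} {G' : E → E} (hG : ∀ z, HasGradientAt G (G' z) z)
    (x v : E) (t : ℝ) :
    HasDerivAt (fun s : ℝ => G (x + s • v)) ⟪G' (x + t • v), v⟫ t := by
  have hline : HasDerivAt (fun s : ℝ => x + s • v) v t := by
    simpa using ((hasDerivAt_id t).smul_const v).const_add x
  have := (hG (x + t • v)).hasFDerivAt.comp_hasDerivAt t hline
  simp [toDual_apply_apply] at this; exact this

/-- Descent lemma: smoothness upper bound. -/
lemma descent_lemma' {G : E → ℝ} {G' : E → E} (hG : ∀ z, HasGradientAt G (G' z) z)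
    {L : ℝ} (hL : 0 ≤ L) (hLip : ∀ a b, ‖G' a - G' b‖ ≤ L * ‖a - b‖)
    (x y : E) : G y ≤ G x + ⟪G' x, y - x⟫ + L / 2 * ‖y - x‖ ^ 2 := by
  set v := y - x with hv
  have hG'cont : Continuous G' := by
    refine (LipschitzWith.of_dist_le_mul (K := L.toNNReal) (f := G') fun a b => ?_).continuous
    rw [Real.coe_toNNReal L hL, dist_eq_norm, dist_eq_norm]
    exact hLip a b
  have hcont : Continuous fun t : ℝ => ⟪G' (x + t • v), v⟫ := by
    exact (hG'cont.comp (by continuity)).inner continuous_const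
  have hftc : G (x + (1:ℝ) • v) - G (x + (0:ℝ) • v)
      = ∫ t in (0:ℝ)..1, ⟪G' (x + t • v), v⟫ := by
    refine (integral_eq_sub_of_hasDerivAt (fun t _ => line_hasDerivAt' hG x v t) ?_).symm
    exact hcont.intervalIntegrable 0 1
  have hy : x + (1:ℝ) • v = y := by rw [hv]; abel_nf; simp
  have hbound : ∫ t in (0:ℝ)..1, ⟪G' (x + t • v), v⟫
      ≤ ∫ t in (0:ℝ)..1, (⟪G' x, v⟫ + t * (L * ‖v‖ ^ 2)) := by
    refine integral_mono_on (by norm_num) (hcont.intervalIntegrable 0 1)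
      ((continuous_const.add (continuous_id.mul continuous_const)).intervalIntegrable 0 1) ?_
    intro t ht
    have h1 : ⟪G' (x + t • v) - G' x, v⟫ ≤ L * t * ‖v‖ ^ 2 := by
      calc ⟪G' (x + t • v) - G' x, v⟫ ≤ ‖G' (x + t • v) - G' x‖ * ‖v‖ :=
            real_inner_le_norm _ _
        _ ≤ (L * ‖(x + t • v) - x‖) * ‖v‖ := by
            gcongr; exact hLip _ _
        _ = L * (|t| * ‖v‖) * ‖v‖ := by rw [add_sub_cancel_left, norm_smul]; simp
        _ = L * |t| * ‖v‖ ^ 2 := by ring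
        _ = L * t * ‖v‖ ^ 2 := by rw [abs_of_nonneg ht.1]
    have := inner_sub_left (𝕜 := ℝ) (G' (x + t • v)) (G' x) v
    nlinarith [this]
  have hInt2 : IntervalIntegrable (fun t : ℝ => t * (L * ‖v‖ ^ 2))
      MeasureTheory.volume 0 1 :=
    ((continuous_id.mul continuous_const : Continuous fun t : ℝ => t * (L * ‖v‖ ^ 2))).intervalIntegrable 0 1
  have hint : ∫ t in (0:ℝ)..1, (⟪G' x, v⟫ + t * (L * ‖v‖ ^ 2))
      = ⟪G' x, v⟫ + L / 2 * ‖v‖ ^ 2 := by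
    rw [integral_add intervalIntegrable_const hInt2, integral_mul_const, integral_id,
      integral_const]
    norm_num
    ring
  have := hftc
  rw [hy] at this
  simp only [zero_smul, add_zero] at this
  linarith [hbound, hint.le, hint.ge, this.le, this.ge]

/-- First-order lower bound from strong convexity. -/
lemma strong_first_order {F : E → ℝ} {F' : E → E} (hF : ∀ z, HasGradientAt F (F' z) z)
    {μ : ℝ} (hconv : StronglyConvexOn Set.univ μ F) (x y : E) :
    F x + ⟪F' x, y - x⟫ + μ / 2 * ‖y - x‖ ^ 2 ≤ F y := by
  set v := y - x with hv
  have hd : HasDerivAt (fun t : ℝ => F (x + t • v)) ⟪F' x, v⟫ 0 := by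
    simpa using line_hasDerivAt' hF x v 0
  have hslope : Filter.Tendsto (slope (fun t : ℝ => F (x + t • v)) 0) (𝓝[>] 0)
      (𝓝 ⟪F' x, v⟫) :=
    (hasDerivAt_iff_tendsto_slope.mp hd).mono_left
      (nhdsWithin_mono 0 fun t ht => ne_of_gt ht)
  have hg : Filter.Tendsto (fun t : ℝ => F y - F x - μ / 2 * (1 - t) * ‖y - x‖ ^ 2)
      (𝓝[>] 0) (𝓝 (F y - F x - μ / 2 * ‖y - x‖ ^ 2)) := by
    have : Filter.Tendsto (fun t : ℝ => F y - F x - μ / 2 * (1 - t) * ‖y - x‖ ^ 2)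
        (𝓝 0) (𝓝 (F y - F x - μ / 2 * (1 - 0) * ‖y - x‖ ^ 2)) := by
      apply Filter.Tendsto.sub tendsto_const_nhds
      exact (((tendsto_const_nhds.sub tendsto_id).const_mul (μ/2)).mul tendsto_const_nhds)
    simpa using this.mono_left nhdsWithin_le_nhds
  have hev : ∀ᶠ t in 𝓝[>] (0:ℝ), slope (fun t : ℝ => F (x + t • v)) 0 t
      ≤ F y - F x - μ / 2 * (1 - t) * ‖y - x‖ ^ 2 := by
    filter_upwards [Ioo_mem_nhdsGT_of_mem (by norm_num : (0:ℝ) ∈ Set.Ico 0 1)] with t ht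
    have ht0 : 0 < t := ht.1
    have ht1 : t ≤ 1 := ht.2.le
    have hc := hconv (Set.mem_univ y) (Set.mem_univ x) ht0.le ht1
    have hpt : t • y + (1 - t) • x = x + t • v := by
      rw [hv]; module
    rw [hpt] at hc
    have hslope_eq : slope (fun t : ℝ => F (x + t • v)) 0 t
        = (F (x + t • v) - F x) / t := by
      simp [slope_def_field, div_eq_inv_mul]
    rw [hslope_eq, div_le_iff₀ ht0]
    nlinarith [hc]
  have := le_of_tendsto_of_tendsto hslope hg hev
  linarith [this]

/-- Cocoercivity of the gradient of a convex smooth function. -/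
lemma cocoercivity {F : E → ℝ} {F' : E → E} (hF : ∀ z, HasGradientAt F (F' z) z)
    {L : ℝ} (hL : 0 < L) (hLip : ∀ a b, ‖F' a - F' b‖ ≤ L * ‖a - b‖)
    (hfo : ∀ x y : E, F x + ⟪F' x, y - x⟫ ≤ F y) (x y : E) :
    1 / L * ‖F' x - F' y‖ ^ 2 ≤ ⟪F' x - F' y, x - y⟫ := by
  have key : ∀ a b : E, F a + ⟪F' a, b - a⟫ + 1 / (2 * L) * ‖F' b - F' a‖ ^ 2 ≤ F b := by
    intro a b
    set φ : E → ℝ := fun z => F z - ⟪F' a, z⟫ with hφ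
    set φ' : E → E := fun z => F' z - F' a with hφ'
    have hφg : ∀ z, HasGradientAt φ (φ' z) z := by
      intro z
      rw [hasGradientAt_iff_hasFDerivAt]
      have h1 := (hF z).hasFDerivAt
      have h2 := (toDual ℝ E (F' a)).hasFDerivAt (x := z)
      have := h1.sub h2
      rw [show φ' z = F' z - F' a from rfl, map_sub]; exact this
    have hφLip : ∀ c d : E, ‖φ' c - φ' d‖ ≤ L * ‖c - d‖ := by
      intro c d; simpa [φ', sub_sub_sub_cancel_right] using hLip c d
    have hmin : ∀ z : E, φ a ≤ φ z := by
      intro z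
      have := hfo a z
      have hir : ⟪F' a, z - a⟫ = ⟪F' a, z⟫ - ⟪F' a, a⟫ := inner_sub_right _ _ _
      simp only [φ]
      linarith [this, hir.le, hir.ge]
    have hdesc := descent_lemma' hφg hL.le hφLip b (b - (1 / L) • φ' b)
    have h1 : φ a ≤ φ (b - (1 / L) • φ' b) := hmin _
    have hsub : (b - (1 / L) • φ' b) - b = -((1/L) • φ' b) := by abel
    rw [hsub] at hdesc
    have hinner : ⟪φ' b, -((1/L) • φ' b)⟫ = -(1/L) * ‖φ' b‖ ^ 2 := by
      rw [inner_neg_right, real_inner_smul_right, real_inner_self_eq_norm_sq]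
      ring
    have hns : ‖(1/L : ℝ)‖ = 1/L := by
      rw [Real.norm_eq_abs, abs_of_pos (by positivity)]
    have hnorm : ‖-((1/L) • φ' b)‖ ^ 2 = (1/L)^2 * ‖φ' b‖ ^ 2 := by
      rw [norm_neg, norm_smul, hns]; ring
    rw [hinner, hnorm] at hdesc
    have hcomb : φ a ≤ φ b - 1 / (2 * L) * ‖φ' b‖ ^ 2 := by
      have hLL : -(1/L) * ‖φ' b‖ ^ 2 + L / 2 * ((1/L)^2 * ‖φ' b‖ ^ 2)
          = -(1/(2*L)) * ‖φ' b‖ ^ 2 := by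
        field_simp
        ring
      linarith [h1, hdesc, hLL.le, hLL.ge]
    have hir : ⟪F' a, b - a⟫ = ⟪F' a, b⟫ - ⟪F' a, a⟫ := inner_sub_right _ _ _
    simp only [φ, φ'] at hcomb
    linarith [hcomb, hir.le, hir.ge]
  have k1 := key x y
  have k2 := key y x
  have e1 : ⟪F' x - F' y, x - y⟫ = ⟪F' x, x - y⟫ - ⟪F' y, x - y⟫ := inner_sub_left _ _ _
  have e2 : ⟪F' x, y - x⟫ = -⟪F' x, x - y⟫ := by
    rw [← inner_neg_right]; congr 1; abel
  have e3 : ⟪F' y, x - y⟫ = ⟪F' y, x - y⟫ := rfl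
  have e4 : ‖F' y - F' x‖ ^ 2 = ‖F' x - F' y‖ ^ 2 := by rw [norm_sub_rev]
  rw [e4] at k1
  have hhalf : 1/(2*L) * ‖F' x - F' y‖ ^ 2 + 1/(2*L) * ‖F' x - F' y‖ ^ 2
      = 1/L * ‖F' x - F' y‖ ^ 2 := by
    field_simp
    ring
  linarith [k1, k2, e1.le, e1.ge, e2.le, e2.ge, e4.le, e4.ge, hhalf.le, hhalf.ge]

end Aux

/-- One step of inexact projected gradient descent (proof of Lemma C.5): if `F` is
differentiable, `μ`-strongly convex and `L`-smooth on a real Hilbert space `E`,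
`w* ∈ W` with `∇F(w*) = 0`, `0 < η ≤ 1/L`, the gradient estimate `g` satisfies
`‖g − ∇F(w)‖ ≤ Λ`, and `p` is the metric projection of `w − η g` onto the nonempty
closed convex set `W`, then `‖p − w*‖ ≤ √(1 − ημ) ‖w − w*‖ + η Λ`. -/
theorem inexact_projected_gradient_step {E : Type*} [NormedAddCommGroup E]
    [InnerProductSpace ℝ E] [CompleteSpace E]
    (W : Set E) (hWne : W.Nonempty) (hWclosed : IsClosed W) (hWconv : Convex ℝ W)
    (μ L : ℝ) (hμ : 0 < μ) (hμL : μ ≤ L)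
    (F : E → ℝ) (hFd : Differentiable ℝ F)
    (hconv : StronglyConvexOn Set.univ μ F)
    (hsmooth : ∀ w w' : E, ‖gradient F w - gradient F w'‖ ≤ L * ‖w - w'‖)
    (wstar : E) (hwmem : wstar ∈ W) (hstar : gradient F wstar = 0)
    (η : ℝ) (hη0 : 0 < η) (hη : η ≤ 1 / L)
    (w g : E) (Λ : ℝ) (hΛ : 0 ≤ Λ) (hg : ‖g - gradient F w‖ ≤ Λ)
    (p : E) (hpmem : p ∈ W) (hproj : ∀ y ∈ W, ‖w - η • g - p‖ ≤ ‖w - η • g - y‖) :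
    ‖p - wstar‖ ≤ Real.sqrt (1 - η * μ) * ‖w - wstar‖ + η * Λ := by
  have hL : 0 < L := lt_of_lt_of_le hμ hμL
  have hF' : ∀ z, HasGradientAt F (gradient F z) z := fun z => (hFd z).hasGradientAt
  set d := gradient F w with hd
  set x := w - η • g with hx
  -- Step 1: projection is closer to wstar
  haveI : Nonempty ↥W := hWne.to_subtype
  have hinf : ‖x - p‖ = ⨅ y : W, ‖x - y‖ := by
    refine le_antisymm (le_ciInf fun y => hproj y y.2) ?_
    have hb : BddBelow (Set.range fun y : W => ‖x - (y : E)‖) := by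
      refine ⟨0, ?_⟩
      rintro r ⟨y, rfl⟩
      exact norm_nonneg _
    exact ciInf_le hb ⟨p, hpmem⟩
  have hVI : ⟪x - p, wstar - p⟫_ℝ ≤ 0 :=
    (norm_eq_iInf_iff_real_inner_le_zero hWconv hpmem).mp hinf wstar hwmem
  have hstep1 : ‖p - wstar‖ ≤ ‖x - wstar‖ := by
    have hdecomp : x - wstar = (x - p) + (p - wstar) := by abel
    have hexp : ‖x - wstar‖ ^ 2
        = ‖x - p‖ ^ 2 + 2 * ⟪x - p, p - wstar⟫_ℝ + ‖p - wstar‖ ^ 2 := by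
      rw [hdecomp]; exact norm_add_sq_real _ _
    have hip : ⟪x - p, p - wstar⟫_ℝ = -⟪x - p, wstar - p⟫_ℝ := by
      rw [← inner_neg_right]; congr 1; abel
    have hsq : ‖p - wstar‖ ^ 2 ≤ ‖x - wstar‖ ^ 2 := by
      nlinarith [sq_nonneg ‖x - p‖, hVI, hip.le, hip.ge, hexp.le, hexp.ge]
    calc ‖p - wstar‖ = Real.sqrt (‖p - wstar‖ ^ 2) := by
          rw [Real.sqrt_sq (norm_nonneg _)]
      _ ≤ Real.sqrt (‖x - wstar‖ ^ 2) := Real.sqrt_le_sqrt hsq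
      _ = ‖x - wstar‖ := Real.sqrt_sq (norm_nonneg _)
  -- Step 2: triangle inequality
  have hstep2 : ‖x - wstar‖ ≤ ‖w - wstar - η • d‖ + η * Λ := by
    have hdecomp : x - wstar = (w - wstar - η • d) + η • (d - g) := by
      rw [hx, smul_sub]; abel
    calc ‖x - wstar‖ ≤ ‖w - wstar - η • d‖ + ‖η • (d - g)‖ := by
          rw [hdecomp]; exact norm_add_le _ _
      _ ≤ ‖w - wstar - η • d‖ + η * Λ := by
          gcongr
          rw [norm_smul, Real.norm_eq_abs, abs_of_pos hη0]
          have : ‖d - g‖ = ‖g - d‖ := norm_sub_rev _ _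
          rw [this]
          exact mul_le_mul_of_nonneg_left hg hη0.le
  -- Step 3: contraction
  have hfo : ∀ a b : E, F a + ⟪gradient F a, b - a⟫_ℝ ≤ F b := by
    intro a b
    have := strong_first_order hF' hconv a b
    nlinarith [this, sq_nonneg ‖b - a‖, hμ.le]
  have hcoco := cocoercivity hF' hL hsmooth hfo w wstar
  rw [hstar, sub_zero] at hcoco
  have hmono : μ * ‖w - wstar‖ ^ 2 ≤ ⟪d, w - wstar⟫_ℝ := by
    have h1 := strong_first_order hF' hconv w wstar
    have h2 := strong_first_order hF' hconv wstar w
    rw [hstar] at h2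
    simp only [inner_zero_left] at h2
    have hipneg : ⟪d, wstar - w⟫_ℝ = -⟪d, w - wstar⟫_ℝ := by
      rw [← inner_neg_right]; congr 1; abel
    have hnrev : ‖wstar - w‖ ^ 2 = ‖w - wstar‖ ^ 2 := by rw [norm_sub_rev]
    rw [hipneg, hnrev] at h1
    linarith [h1, h2]
  have hcontr_sq : ‖w - wstar - η • d‖ ^ 2 ≤ (1 - η * μ) * ‖w - wstar‖ ^ 2 := by
    have hexp : ‖w - wstar - η • d‖ ^ 2
        = ‖w - wstar‖ ^ 2 - 2 * (η * ⟪w - wstar, d⟫_ℝ) + η ^ 2 * ‖d‖ ^ 2 := by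
      rw [norm_sub_sq_real, real_inner_smul_right, norm_smul, Real.norm_eq_abs,
        abs_of_pos hη0]
      ring
    have hsym : ⟪w - wstar, d⟫_ℝ = ⟪d, w - wstar⟫_ℝ := real_inner_comm _ _
    have hη1L : η * (1 / L * ‖d‖ ^ 2) ≤ η * ⟪d, w - wstar⟫_ℝ :=
      mul_le_mul_of_nonneg_left hcoco hη0.le
    have hηsq : η ^ 2 * ‖d‖ ^ 2 ≤ η * (1 / L * ‖d‖ ^ 2) := by
      have : η * ‖d‖ ^ 2 ≤ 1 / L * ‖d‖ ^ 2 :=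
        mul_le_mul_of_nonneg_right hη (sq_nonneg _)
      nlinarith [this, hη0]
    have hmono' : η * (μ * ‖w - wstar‖ ^ 2) ≤ η * ⟪d, w - wstar⟫_ℝ :=
      mul_le_mul_of_nonneg_left hmono hη0.le
    nlinarith [hexp.le, hexp.ge, hsym.le, hsym.ge, hη1L, hηsq, hmono']
  have hcontr : ‖w - wstar - η • d‖ ≤ Real.sqrt (1 - η * μ) * ‖w - wstar‖ := by
    calc ‖w - wstar - η • d‖ = Real.sqrt (‖w - wstar - η • d‖ ^ 2) := by
          rw [Real.sqrt_sq (norm_nonneg _)]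
      _ ≤ Real.sqrt ((1 - η * μ) * ‖w - wstar‖ ^ 2) := Real.sqrt_le_sqrt hcontr_sq
      _ = Real.sqrt (1 - η * μ) * ‖w - wstar‖ := by
          have h1μ : (0:ℝ) ≤ 1 - η * μ := by
            have h1 : η * μ ≤ (1/L) * μ := mul_le_mul_of_nonneg_right hη hμ.le
            have h2 : (1/L) * μ ≤ 1 := by
              rw [one_div, inv_mul_le_iff₀ hL, mul_one]
              exact hμL
            linarith
          rw [Real.sqrt_mul h1μ, Real.sqrt_sq (norm_nonneg _)]
  linarith [hstep1, hstep2, hcontr]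
end

section
/- Let E be a real Hilbert space, W ⊆ E a nonempty closed convex set, and let F : E → ℝ be differentiable, μ-strongly convex and L-smooth on E with 0 < μ ≤ L. Let w* ∈ W satisfy ∇F(w*) = 0, set η = 1/L, and let Λ ≥ 0 and D ≥ 0. Consider any sequence (w_t)_{t≥0} in W with ‖w_0 − w*‖ ≤ D and w_{t+1} = proj_W(w_t − η·g_t), where at every step ‖g_t − ∇F(w_t)‖ ≤ Λ and proj_W is the metric projection onto W. Then for every T ≥ 0, ‖w_T − w*‖ ≤ (1 − μ/L)^{T/2}·D + (2/μ)·Λ. -/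
section Helpers

open InnerProductSpace Filter Set
open scoped RealInnerProductSpace Topology

variable {E : Type*} [NormedAddCommGroup E] [InnerProductSpace ℝ E] [CompleteSpace E]

lemma line_deriv {F : E → ℝ} (hFd : Differentiable ℝ F) (x v : E) (t : ℝ) :
    HasDerivAt (fun s : ℝ => F (x + s • v)) ⟪gradient F (x + t • v), v⟫_ℝ t := by
  have h1 : HasGradientAt F (gradient F (x + t • v)) (x + t • v) :=
    (hFd _).hasGradientAt
  have h2 : HasDerivAt (fun s : ℝ => x + s • v) v t := by
    simpa using ((hasDerivAt_id t).smul_const v).const_add x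
  have h3 := h1.hasFDerivAt.comp_hasDerivAt t h2
  simpa [Function.comp_def] using h3

lemma first_order {F : E → ℝ} {μ : ℝ} (hFd : Differentiable ℝ F)
    (hconv : ∀ ⦃w : E⦄, w ∈ (Set.univ : Set E) → ∀ ⦃w' : E⦄, w' ∈ (Set.univ : Set E) →
      ∀ ⦃t : ℝ⦄, 0 ≤ t → t ≤ 1 →
      F (t • w + (1 - t) • w') ≤ t * F w + (1 - t) * F w' - μ / 2 * (t * (1 - t)) * ‖w - w'‖ ^ 2)
    (x y : E) :
    F x + ⟪gradient F x, y - x⟫_ℝ + μ / 2 * ‖y - x‖ ^ 2 ≤ F y := by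
  set v := y - x with hv
  set φ : ℝ → ℝ := fun s => F (x + s • v) with hφdef
  have hφ : HasDerivAt φ ⟪gradient F x, v⟫_ℝ 0 := by
    simpa using line_deriv hFd x v 0
  have hslope : Tendsto (slope φ 0) (𝓝[>] 0) (𝓝 ⟪gradient F x, v⟫_ℝ) :=
    (hasDerivAt_iff_tendsto_slope.mp hφ).mono_left
      (nhdsWithin_mono _ (fun z hz => ne_of_gt hz))
  have hlim2 : Tendsto (fun t : ℝ => F y - F x - μ / 2 * (1 - t) * ‖v‖ ^ 2) (𝓝[>] 0)
      (𝓝 (F y - F x - μ / 2 * ‖v‖ ^ 2)) := by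
    have : ContinuousAt (fun t : ℝ => F y - F x - μ / 2 * (1 - t) * ‖v‖ ^ 2) 0 := by
      fun_prop
    have h2 := this.tendsto.mono_left (nhdsWithin_le_nhds (s := Set.Ioi (0:ℝ)))
    simpa using h2
  have hev : ∀ᶠ t in 𝓝[>] (0:ℝ), slope φ 0 t ≤ F y - F x - μ / 2 * (1 - t) * ‖v‖ ^ 2 := by
    filter_upwards [Ioc_mem_nhdsGT_of_mem (Set.left_mem_Ico.mpr zero_lt_one)] with t ht
    have hkey : F (x + t • v) ≤ t * F y + (1 - t) * F x - μ / 2 * (t * (1 - t)) * ‖y - x‖ ^ 2 := by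
      have h := hconv (Set.mem_univ y) (Set.mem_univ x) ht.1.le ht.2
      have heq : t • y + (1 - t) • x = x + t • v := by
        rw [hv]; module
      rwa [heq] at h
    have hφ0 : φ 0 = F x := by simp [hφdef]
    have : slope φ 0 t = (φ t - φ 0) / t := by
      rw [slope_def_field]; ring_nf
    rw [this, div_le_iff₀ ht.1, hφ0]
    have : φ t = F (x + t • v) := rfl
    rw [this]
    nlinarith [hkey, ht.1]
  have hle := le_of_tendsto_of_tendsto hslope hlim2 hev
  have hnv : ‖v‖ = ‖y - x‖ := by rw [hv]
  nlinarith [hle]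

lemma descent_lemma {F : E → ℝ} {L : ℝ} (hFd : Differentiable ℝ F) (hL : 0 < L)
    (hsmooth : ∀ w w' : E, ‖gradient F w - gradient F w'‖ ≤ L * ‖w - w'‖)
    (x y : E) :
    F y ≤ F x + ⟪gradient F x, y - x⟫_ℝ + L / 2 * ‖y - x‖ ^ 2 := by
  set v := y - x with hv
  set ψ : ℝ → ℝ := fun t => F (x + t • v) - t * ⟪gradient F x, v⟫_ℝ - L / 2 * t ^ 2 * ‖v‖ ^ 2
    with hψdef
  have hψ : ∀ t : ℝ, HasDerivAt ψ
      (⟪gradient F (x + t • v), v⟫_ℝ - ⟪gradient F x, v⟫_ℝ - L * t * ‖v‖ ^ 2) t := by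
    intro t
    have h1 := line_deriv hFd x v t
    have h2 : HasDerivAt (fun t : ℝ => t * ⟪gradient F x, v⟫_ℝ) ⟪gradient F x, v⟫_ℝ t := by
      simpa using (hasDerivAt_id t).mul_const ⟪gradient F x, v⟫_ℝ
    have h3 : HasDerivAt (fun t : ℝ => L / 2 * t ^ 2 * ‖v‖ ^ 2) (L * t * ‖v‖ ^ 2) t := by
      have := ((hasDerivAt_pow 2 t).const_mul (L / 2)).mul_const (‖v‖ ^ 2)
      exact this.congr_deriv (by rw [show (2:ℕ) - 1 = 1 from rfl]; push_cast; ring)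
    exact (h1.sub h2).sub h3
  have hanti : AntitoneOn ψ (Icc 0 1) := by
    apply antitoneOn_of_deriv_nonpos (convex_Icc 0 1)
    · exact (Continuous.continuousOn (by
        have : Continuous ψ := by
          apply Continuous.sub
          apply Continuous.sub
          · exact hFd.continuous.comp (by continuity)
          · continuity
          · continuity
        exact this))
    · intro t ht
      exact ((hψ t).differentiableAt).differentiableWithinAt
    · intro t ht
      rw [interior_Icc] at ht
      rw [(hψ t).deriv]
      have hb : ⟪gradient F (x + t • v) - gradient F x, v⟫_ℝ ≤ L * t * ‖v‖ ^ 2 := by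
        calc ⟪gradient F (x + t • v) - gradient F x, v⟫_ℝ
            ≤ ‖gradient F (x + t • v) - gradient F x‖ * ‖v‖ := real_inner_le_norm _ _
          _ ≤ (L * ‖(x + t • v) - x‖) * ‖v‖ := by
              apply mul_le_mul_of_nonneg_right (hsmooth _ _) (norm_nonneg _)
          _ = L * t * ‖v‖ ^ 2 := by
              rw [show (x + t • v) - x = t • v by abel, norm_smul]
              simp [abs_of_pos ht.1]
              ring
      rw [inner_sub_left] at hb
      linarith
  have h01 := hanti (left_mem_Icc.mpr zero_le_one) (right_mem_Icc.mpr zero_le_one) zero_le_one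
  have hψ0 : ψ 0 = F x := by simp [hψdef]
  have hψ1 : ψ 1 = F y - ⟪gradient F x, v⟫_ℝ - L / 2 * ‖v‖ ^ 2 := by
    simp [hψdef, hv]
  rw [hψ0, hψ1] at h01
  linarith

lemma coco {F : E → ℝ} {μ L : ℝ} (hFd : Differentiable ℝ F) (hμ : 0 < μ) (hμL : μ ≤ L)
    (hconv : ∀ ⦃w : E⦄, w ∈ (Set.univ : Set E) → ∀ ⦃w' : E⦄, w' ∈ (Set.univ : Set E) →
      ∀ ⦃t : ℝ⦄, 0 ≤ t → t ≤ 1 →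
      F (t • w + (1 - t) • w') ≤ t * F w + (1 - t) * F w' - μ / 2 * (t * (1 - t)) * ‖w - w'‖ ^ 2)
    (hsmooth : ∀ w w' : E, ‖gradient F w - gradient F w'‖ ≤ L * ‖w - w'‖)
    (x y : E) :
    1 / L * ‖gradient F x - gradient F y‖ ^ 2 ≤ ⟪gradient F x - gradient F y, x - y⟫_ℝ := by
  have hL : 0 < L := lt_of_lt_of_le hμ hμL
  -- half co-coercivity
  have half : ∀ a b : E, 1 / (2 * L) * ‖gradient F b - gradient F a‖ ^ 2
      ≤ F b - F a - ⟪gradient F a, b - a⟫_ℝ := by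
    intro a b
    set Δ := gradient F b - gradient F a with hΔ
    set z := b - (1 / L) • Δ with hz
    have h1 : F a + ⟪gradient F a, z - a⟫_ℝ ≤ F z := by
      have := first_order hFd hconv a z
      nlinarith [sq_nonneg ‖z - a‖, hμ.le, mul_nonneg (mul_nonneg (hμ.le) (by norm_num : (0:ℝ) ≤ 1/2)) (sq_nonneg ‖z - a‖)]
    have h2 : F z ≤ F b + ⟪gradient F b, z - b⟫_ℝ + L / 2 * ‖z - b‖ ^ 2 :=
      descent_lemma hFd hL hsmooth b z
    have hzb : z - b = -((1 / L) • Δ) := by rw [hz]; abel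
    have hza : z - a = (b - a) - (1 / L) • Δ := by rw [hz]; abel
    have e1 : ⟪gradient F b, z - b⟫_ℝ = -(1 / L) * ⟪gradient F b, Δ⟫_ℝ := by
      rw [hzb, inner_neg_right, real_inner_smul_right]; ring
    have e2 : ‖z - b‖ ^ 2 = (1 / L) ^ 2 * ‖Δ‖ ^ 2 := by
      rw [hzb, norm_neg, norm_smul, Real.norm_eq_abs,
        abs_of_pos (by positivity : (0:ℝ) < 1 / L)]
      ring
    have e3 : ⟪gradient F a, z - a⟫_ℝ
        = ⟪gradient F a, b - a⟫_ℝ - (1 / L) * ⟪gradient F a, Δ⟫_ℝ := by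
      rw [hza, inner_sub_right, real_inner_smul_right]
    have e4 : ⟪gradient F b, Δ⟫_ℝ - ⟪gradient F a, Δ⟫_ℝ = ‖Δ‖ ^ 2 := by
      rw [← inner_sub_left, ← hΔ, real_inner_self_eq_norm_sq]
    rw [e1, e2] at h2
    rw [e3] at h1
    have e7 : 1 / L * ⟪gradient F b, Δ⟫_ℝ - 1 / L * ⟪gradient F a, Δ⟫_ℝ
        = 1 / L * ‖Δ‖ ^ 2 := by
      rw [← mul_sub, e4]
    have e6 : L / 2 * ((1 / L) ^ 2 * ‖Δ‖ ^ 2) = 1 / (2 * L) * ‖Δ‖ ^ 2 := by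
      field_simp
    have e8 : 1 / L * ‖Δ‖ ^ 2 = 2 * (1 / (2 * L) * ‖Δ‖ ^ 2) := by
      field_simp
    linarith [h1, h2, e6, e7, e8]
  have hxy := half y x
  have hyx := half x y
  have hsym : ‖gradient F x - gradient F y‖ = ‖gradient F y - gradient F x‖ := norm_sub_rev _ _
  have e5 : ⟪gradient F x - gradient F y, x - y⟫_ℝ
      = -(⟪gradient F y, x - y⟫_ℝ) - ⟪gradient F x, y - x⟫_ℝ := by
    rw [inner_sub_left]
    rw [show y - x = -(x - y) by abel, inner_neg_right]
    ring
  rw [e5, hsym]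
  rw [hsym] at hxy
  have e9 : 1 / L * ‖gradient F y - gradient F x‖ ^ 2
      = 2 * (1 / (2 * L) * ‖gradient F y - gradient F x‖ ^ 2) := by
    field_simp
  linarith [hxy, hyx, e9]

lemma strong_mono {F : E → ℝ} {μ : ℝ} (hFd : Differentiable ℝ F)
    (hconv : ∀ ⦃w : E⦄, w ∈ (Set.univ : Set E) → ∀ ⦃w' : E⦄, w' ∈ (Set.univ : Set E) →
      ∀ ⦃t : ℝ⦄, 0 ≤ t → t ≤ 1 →
      F (t • w + (1 - t) • w') ≤ t * F w + (1 - t) * F w' - μ / 2 * (t * (1 - t)) * ‖w - w'‖ ^ 2)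
    (x y : E) :
    μ * ‖x - y‖ ^ 2 ≤ ⟪gradient F x - gradient F y, x - y⟫_ℝ := by
  have h1 := first_order hFd hconv x y
  have h2 := first_order hFd hconv y x
  have e5 : ⟪gradient F x - gradient F y, x - y⟫_ℝ
      = -(⟪gradient F y, x - y⟫_ℝ) - ⟪gradient F x, y - x⟫_ℝ := by
    rw [inner_sub_left, show y - x = -(x - y) by abel, inner_neg_right]
    ring
  have hn : ‖y - x‖ = ‖x - y‖ := norm_sub_rev _ _
  have hn2 : μ / 2 * ‖y - x‖ ^ 2 = μ / 2 * ‖x - y‖ ^ 2 := by rw [hn]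
  rw [e5]
  linarith [h1, h2, hn2]

lemma contraction {F : E → ℝ} {μ L : ℝ} (hFd : Differentiable ℝ F) (hμ : 0 < μ) (hμL : μ ≤ L)
    (hconv : ∀ ⦃w : E⦄, w ∈ (Set.univ : Set E) → ∀ ⦃w' : E⦄, w' ∈ (Set.univ : Set E) →
      ∀ ⦃t : ℝ⦄, 0 ≤ t → t ≤ 1 →
      F (t • w + (1 - t) • w') ≤ t * F w + (1 - t) * F w' - μ / 2 * (t * (1 - t)) * ‖w - w'‖ ^ 2)
    (hsmooth : ∀ w w' : E, ‖gradient F w - gradient F w'‖ ≤ L * ‖w - w'‖)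
    (x y : E) :
    ‖(x - (1 / L) • gradient F x) - (y - (1 / L) • gradient F y)‖
      ≤ Real.sqrt (1 - μ / L) * ‖x - y‖ := by
  have hL : 0 < L := lt_of_lt_of_le hμ hμL
  set d := x - y with hd
  set Δ := gradient F x - gradient F y with hΔ
  have hrw : (x - (1 / L) • gradient F x) - (y - (1 / L) • gradient F y)
      = d - (1 / L) • Δ := by rw [hd, hΔ]; module
  have hsq : ‖d - (1 / L) • Δ‖ ^ 2 ≤ (1 - μ / L) * ‖d‖ ^ 2 := by
    have hexp : ‖d - (1 / L) • Δ‖ ^ 2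
        = ‖d‖ ^ 2 - 2 * (1 / L * ⟪Δ, d⟫_ℝ) + (1 / L) ^ 2 * ‖Δ‖ ^ 2 := by
      rw [norm_sub_sq_real, real_inner_smul_right, norm_smul, Real.norm_eq_abs,
        abs_of_pos (by positivity : (0:ℝ) < 1 / L), real_inner_comm]
      ring
    have hco := coco hFd hμ hμL hconv hsmooth x y
    have hmono := strong_mono hFd hconv x y
    rw [← hd, ← hΔ] at hco hmono
    have hcoL : (1 / L) ^ 2 * ‖Δ‖ ^ 2 ≤ 1 / L * ⟪Δ, d⟫_ℝ := by
      have := mul_le_mul_of_nonneg_left hco (le_of_lt (by positivity : (0:ℝ) < 1 / L))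
      calc (1 / L) ^ 2 * ‖Δ‖ ^ 2 = 1 / L * (1 / L * ‖Δ‖ ^ 2) := by ring
        _ ≤ 1 / L * ⟪Δ, d⟫_ℝ := this
    have hmonoL : μ / L * ‖d‖ ^ 2 ≤ 1 / L * ⟪Δ, d⟫_ℝ := by
      have := mul_le_mul_of_nonneg_left hmono (le_of_lt (by positivity : (0:ℝ) < 1 / L))
      calc μ / L * ‖d‖ ^ 2 = 1 / L * (μ * ‖d‖ ^ 2) := by ring
        _ ≤ 1 / L * ⟪Δ, d⟫_ℝ := this
    rw [hexp]
    linarith [hcoL, hmonoL]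
  rw [hrw]
  have h1 : ‖d - (1 / L) • Δ‖ = Real.sqrt (‖d - (1 / L) • Δ‖ ^ 2) :=
    (Real.sqrt_sq (norm_nonneg _)).symm
  rw [h1]
  calc Real.sqrt (‖d - (1 / L) • Δ‖ ^ 2) ≤ Real.sqrt ((1 - μ / L) * ‖d‖ ^ 2) :=
        Real.sqrt_le_sqrt hsq
    _ = Real.sqrt (1 - μ / L) * ‖d‖ := by
        rw [Real.sqrt_mul (by rw [sub_nonneg]; exact (div_le_one hL).mpr hμL)]
        rw [Real.sqrt_sq (norm_nonneg _)]

lemma proj_nonexpansive_at_point {W : Set E} (hWconv : Convex ℝ W)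
    {z p q : E} (hp : p ∈ W) (hq : q ∈ W)
    (hmin : ∀ y ∈ W, ‖z - p‖ ≤ ‖z - y‖) :
    ‖p - q‖ ≤ ‖z - q‖ := by
  haveI : Nonempty W := ⟨⟨p, hp⟩⟩
  have hiInf : ‖z - p‖ = ⨅ y : W, ‖z - y‖ := by
    apply le_antisymm
    · exact le_ciInf fun y => hmin y y.2
    · have hbdd : BddBelow (Set.range fun y : W => ‖z - y‖) :=
        ⟨0, by rintro a ⟨y, rfl⟩; exact norm_nonneg _⟩
      exact ciInf_le hbdd ⟨p, hp⟩
  have hvar := (norm_eq_iInf_iff_real_inner_le_zero hWconv hp).mp hiInf q hq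
  have hexp : ‖z - q‖ ^ 2 = ‖z - p‖ ^ 2 - 2 * ⟪z - p, q - p⟫_ℝ + ‖p - q‖ ^ 2 := by
    have : z - q = (z - p) - (q - p) := by abel
    rw [this, norm_sub_sq_real, norm_sub_rev q p]
  have hsq : ‖p - q‖ ^ 2 ≤ ‖z - q‖ ^ 2 := by
    rw [hexp]; nlinarith [sq_nonneg ‖z - p‖, hvar]
  calc ‖p - q‖ = Real.sqrt (‖p - q‖ ^ 2) := (Real.sqrt_sq (norm_nonneg _)).symm
    _ ≤ Real.sqrt (‖z - q‖ ^ 2) := Real.sqrt_le_sqrt hsq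
    _ = ‖z - q‖ := Real.sqrt_sq (norm_nonneg _)

theorem main_thm {E : Type*} [NormedAddCommGroup E]
    [InnerProductSpace ℝ E] [CompleteSpace E]
    (W : Set E) (hWne : W.Nonempty) (hWclosed : IsClosed W) (hWconv : Convex ℝ W)
    (μ L : ℝ) (hμ : 0 < μ) (hμL : μ ≤ L)
    (F : E → ℝ) (hFd : Differentiable ℝ F)
    (hconv : ∀ ⦃w : E⦄, w ∈ (Set.univ : Set E) → ∀ ⦃w' : E⦄, w' ∈ (Set.univ : Set E) →
      ∀ ⦃t : ℝ⦄, 0 ≤ t → t ≤ 1 →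
      F (t • w + (1 - t) • w') ≤ t * F w + (1 - t) * F w' - μ / 2 * (t * (1 - t)) * ‖w - w'‖ ^ 2)
    (hsmooth : ∀ w w' : E, ‖gradient F w - gradient F w'‖ ≤ L * ‖w - w'‖)
    (wstar : E) (hwmem : wstar ∈ W) (hstar : gradient F wstar = 0)
    (Λ D : ℝ) (hΛ : 0 ≤ Λ) (hD : 0 ≤ D)
    (w g : ℕ → E) (hwW : ∀ t, w t ∈ W) (h0 : ‖w 0 - wstar‖ ≤ D)
    (hg : ∀ t, ‖g t - gradient F (w t)‖ ≤ Λ)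
    (hstep : ∀ t, ∀ y ∈ W,
      ‖w t - (1 / L) • g t - w (t + 1)‖ ≤ ‖w t - (1 / L) • g t - y‖) :
    ∀ T : ℕ, ‖w T - wstar‖ ≤ (1 - μ / L) ^ ((T : ℝ) / 2) * D + (2 / μ) * Λ := by
  intro T
  have hL : 0 < L := lt_of_lt_of_le hμ hμL
  set ρ := Real.sqrt (1 - μ / L) with hρ
  have hbase : (0:ℝ) ≤ 1 - μ / L := by rw [sub_nonneg]; exact (div_le_one hL).mpr hμL
  have hρ0 : 0 ≤ ρ := Real.sqrt_nonneg _
  have hhalf : (0:ℝ) ≤ 1 - μ / (2 * L) := by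
    rw [sub_nonneg, div_le_one (by positivity)]
    linarith
  have hρle : ρ ≤ 1 - μ / (2 * L) := by
    rw [hρ]
    calc Real.sqrt (1 - μ / L) ≤ Real.sqrt ((1 - μ / (2 * L)) ^ 2) := by
          apply Real.sqrt_le_sqrt
          have key : (1 - μ / (2 * L)) ^ 2 - (1 - μ / L) = (μ / (2 * L)) ^ 2 := by
            field_simp
            ring
          nlinarith [sq_nonneg (μ / (2 * L))]
      _ = 1 - μ / (2 * L) := Real.sqrt_sq hhalf
  have hstepb : ∀ t, ‖w (t + 1) - wstar‖ ≤ ρ * ‖w t - wstar‖ + 1 / L * Λ := by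
    intro t
    have hproj : ‖w (t + 1) - wstar‖ ≤ ‖(w t - (1 / L) • g t) - wstar‖ := by
      have := proj_nonexpansive_at_point hWconv (hwW (t + 1)) hwmem (fun y hy => hstep t y hy)
      simpa using this
    have hsplit : (w t - (1 / L) • g t) - wstar
        = ((w t - (1 / L) • gradient F (w t)) - (wstar - (1 / L) • gradient F wstar))
          - (1 / L) • (g t - gradient F (w t)) := by
      rw [hstar]
      module
    have hA := contraction hFd hμ hμL hconv hsmooth (w t) wstar
    have hB : ‖(1 / L) • (g t - gradient F (w t))‖ ≤ 1 / L * Λ := by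
      rw [norm_smul, Real.norm_eq_abs, abs_of_pos (by positivity : (0:ℝ) < 1 / L)]
      exact mul_le_mul_of_nonneg_left (hg t) (by positivity)
    calc ‖w (t + 1) - wstar‖ ≤ ‖(w t - (1 / L) • g t) - wstar‖ := hproj
      _ ≤ ‖(w t - (1 / L) • gradient F (w t)) - (wstar - (1 / L) • gradient F wstar)‖
          + ‖(1 / L) • (g t - gradient F (w t))‖ := by
          rw [hsplit]; exact norm_sub_le _ _
      _ ≤ ρ * ‖w t - wstar‖ + 1 / L * Λ := add_le_add hA hB
  have main : ∀ S : ℕ, ‖w S - wstar‖ ≤ ρ ^ S * D + 2 / μ * Λ := by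
    intro S
    induction S with
    | zero =>
      have : (0:ℝ) ≤ 2 / μ * Λ := by positivity
      simpa using le_trans h0 (by linarith)
    | succ t ih =>
      have hmul : ρ * ‖w t - wstar‖ ≤ ρ * (ρ ^ t * D + 2 / μ * Λ) :=
        mul_le_mul_of_nonneg_left ih hρ0
      have hgeo : ρ * (2 / μ * Λ) + 1 / L * Λ ≤ 2 / μ * Λ := by
        have h1 : ρ * (2 / μ * Λ) ≤ (1 - μ / (2 * L)) * (2 / μ * Λ) :=
          mul_le_mul_of_nonneg_right hρle (by positivity)
        have h2 : (1 - μ / (2 * L)) * (2 / μ * Λ) + 1 / L * Λ = 2 / μ * Λ := by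
          field_simp
          ring
        linarith
      calc ‖w (t + 1) - wstar‖ ≤ ρ * ‖w t - wstar‖ + 1 / L * Λ := hstepb t
        _ ≤ ρ * (ρ ^ t * D + 2 / μ * Λ) + 1 / L * Λ := by linarith
        _ = ρ ^ (t + 1) * D + (ρ * (2 / μ * Λ) + 1 / L * Λ) := by ring
        _ ≤ ρ ^ (t + 1) * D + 2 / μ * Λ := by linarith
  have hpow : ρ ^ T = (1 - μ / L) ^ ((T : ℝ) / 2) := by
    rw [hρ, Real.sqrt_eq_rpow, ← Real.rpow_natCast ((1 - μ / L) ^ ((1:ℝ)/2)) T,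
      ← Real.rpow_mul hbase]
    congr 1
    ring
  rw [← hpow]
  exact main T

end Helpers



/-- `T`-step inexact projected gradient descent (Lemmas C.1 and C.5): if `F` is
differentiable, `μ`-strongly convex and `L`-smooth on a real Hilbert space `E`,
`w* ∈ W` with `∇F(w*) = 0`, `η = 1/L`, the iterates stay in the nonempty closed convex
set `W`, start within distance `D` of `w*`, each step projects `w_t − η g_t` onto `W`
(metric projection), and every gradient estimate satisfies `‖g_t − ∇F(w_t)‖ ≤ Λ`, then
`‖w_T − w*‖ ≤ (1 − μ/L)^{T/2} D + (2/μ) Λ` for every `T`. -/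
theorem inexact_projected_gradient_descent {E : Type*} [NormedAddCommGroup E]
    [InnerProductSpace ℝ E] [CompleteSpace E]
    (W : Set E) (hWne : W.Nonempty) (hWclosed : IsClosed W) (hWconv : Convex ℝ W)
    (μ L : ℝ) (hμ : 0 < μ) (hμL : μ ≤ L)
    (F : E → ℝ) (hFd : Differentiable ℝ F)
    (hconv : StronglyConvexOn Set.univ μ F)
    (hsmooth : ∀ w w' : E, ‖gradient F w - gradient F w'‖ ≤ L * ‖w - w'‖)
    (wstar : E) (hwmem : wstar ∈ W) (hstar : gradient F wstar = 0)
    (Λ D : ℝ) (hΛ : 0 ≤ Λ) (hD : 0 ≤ D)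
    (w g : ℕ → E) (hwW : ∀ t, w t ∈ W) (h0 : ‖w 0 - wstar‖ ≤ D)
    (hg : ∀ t, ‖g t - gradient F (w t)‖ ≤ Λ)
    (hstep : ∀ t, ∀ y ∈ W,
      ‖w t - (1 / L) • g t - w (t + 1)‖ ≤ ‖w t - (1 / L) • g t - y‖) :
    ∀ T : ℕ, ‖w T - wstar‖ ≤ (1 - μ / L) ^ ((T : ℝ) / 2) * D + (2 / μ) * Λ := by
  exact main_thm W hWne hWclosed hWconv μ L hμ hμL F hFd hconv hsmooth wstar hwmem hstar
    Λ D hΛ hD w g hwW h0 hg hstep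
end
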